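/- arXiv:2208.04737 — 7 statements merged into one kernel-verified Lean document; each statement's English description precedes it below -/
import Mathlib

section
/- Let T be a contraction and V a bounded operator on a Hilbert space H, and U a unitary commuting with both T and V, such that TV = UVT and VT* = UT*V. Then V commutes with the defect operator D_{T*} = (I - TT*)^{1/2}. -/
set_option synthInstance.maxHeartbeats 1000000
set_option maxHeartbeats 1000000

open ContinuousLinearMap

/-- Anything commuting with a selfadjoint element `a` commutes with every element of the
closed star subalgebra generated by `a`. -/
lemma commute_of_mem_elemental_aux {A : Type*} [CStarAlgebra A] {a b : A}
    (ha : IsSelfAdjoint a) (hab : Commute b a) {c : A}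
    (hc : c ∈ StarAlgebra.elemental ℂ a) : Commute b c := by
  have hclosed : IsClosed {z : A | Commute b z} := by
    have : {z : A | Commute b z} = (fun z => b * z - z * b) ⁻¹' {0} := by
      ext z
      simp [Commute, SemiconjBy, sub_eq_zero]
    rw [this]
    exact isClosed_singleton.preimage <|
      (continuous_const.mul continuous_id).sub (continuous_id.mul continuous_const)
  induction hc using StarAlgebra.elemental.induction_on with
  | self => exact hab
  | star_self => rwa [ha.star_eq]
  | algebraMap r => exact (Algebra.commutes r b).symm
  | add u hu v hv pu pv => exact pu.add_right pv
  | mul u hu v hv pu pv => exact pu.mul_right pv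
  | closure s hs hps v hv =>
      exact closure_minimal (fun u hu => hps u hu) hclosed hv

/-- The continuous functional calculus of `a` lands in the elemental algebra of `a`. -/
lemma cfc_mem_elemental_aux {A : Type*} [CStarAlgebra A] (g : ℂ → ℂ) (a : A) :
    cfc g a ∈ StarAlgebra.elemental ℂ a := by
  refine cfc_cases (· ∈ StarAlgebra.elemental ℂ a) a g (zero_mem _) fun hg ha => ?_
  rw [cfcHom_eq_of_isStarNormal]
  exact ((continuousFunctionalCalculus a) _).2

/-- Under the same doubly-twisted hypotheses, `V` commutes with the
defect operator `D_{T*} = (I - TT*)^{1/2}` of `T*`. -/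
theorem twisted_commutes_defect_adjoint
    {H : Type*} [NormedAddCommGroup H] [InnerProductSpace ℂ H] [CompleteSpace H]
    (T V U D : H →L[ℂ] H)
    (hT : ‖T‖ ≤ 1)
    (hU : adjoint U ∘L U = 1 ∧ U ∘L adjoint U = 1)
    (hUT : U ∘L T = T ∘L U) (hUV : U ∘L V = V ∘L U)
    (hTV : T ∘L V = U ∘L (V ∘L T))
    (hVT : V ∘L adjoint T = U ∘L (adjoint T ∘L V))
    (hDpos : D.IsPositive)
    (hDsq : D ∘L D = 1 - T ∘L adjoint T) :
    V ∘L D = D ∘L V := by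
  -- switch from `∘L` to `*`
  simp only [← mul_def] at hU hUT hUV hTV hVT hDsq ⊢
  obtain ⟨hU1, hU2⟩ := hU
  set S := adjoint T with hS
  -- Step 1: `V` commutes with `T * T*`
  have h2 : U * (V * (T * S)) = U * ((T * S) * V) := by
    calc U * (V * (T * S)) = (U * (V * T)) * S := by noncomm_ring
      _ = (T * V) * S := by rw [← hTV]
      _ = T * (V * S) := by rw [mul_assoc]
      _ = T * (U * (S * V)) := by rw [hVT]
      _ = (T * U) * (S * V) := by rw [mul_assoc]
      _ = (U * T) * (S * V) := by rw [hUT]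
      _ = U * ((T * S) * V) := by noncomm_ring
  have key : V * (T * S) = (T * S) * V := by
    calc V * (T * S) = (adjoint U * U) * (V * (T * S)) := by rw [hU1, one_mul]
      _ = adjoint U * (U * ((T * S) * V)) := by rw [mul_assoc, h2]
      _ = (adjoint U * U) * ((T * S) * V) := by noncomm_ring
      _ = (T * S) * V := by rw [hU1, one_mul]
  -- Step 2: `V` commutes with `D * D`
  have keyD : Commute V (D * D) := by
    rw [hDsq]
    show V * (1 - T * S) = (1 - T * S) * V
    rw [mul_sub, sub_mul, mul_one, one_mul, key]
  -- Step 3: `D` is the CFC square root of `D * D`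
  have hDsa : IsSelfAdjoint D := hDpos.isSelfAdjoint
  have hDnn : (0 : H →L[ℂ] H) ≤ D := (nonneg_iff_isPositive D).mpr hDpos
  have hann : (0 : H →L[ℂ] H) ≤ D * D := by
    simpa [hDsa.star_eq] using star_mul_self_nonneg D
  have hasa : IsSelfAdjoint (D * D) := by
    rw [IsSelfAdjoint, star_mul, hDsa.star_eq]
  have hsqrt : CFC.sqrt (D * D) = D := CFC.sqrt_unique rfl hDnn
  -- Step 4: express `D` via the complex CFC, which lies in the elemental algebra
  have hD_cfc : D = cfc (fun z : ℂ =>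
      ((NNReal.sqrt (Real.toNNReal z.re) : ℝ) : ℂ)) (D * D) := by
    conv_lhs => rw [← hsqrt]
    rw [CFC.sqrt_eq_cfc, cfc_nnreal_eq_real NNReal.sqrt (D * D) hann,
      cfc_real_eq_complex _ hasa]
  have : Commute V D := by
    rw [hD_cfc]
    exact commute_of_mem_elemental_aux hasa keyD (cfc_mem_elemental_aux _ _)
  exact this
end

section
/- Let (T, V) be a pair of doubly twisted operators on a Hilbert space H with T a contraction, i.e., there is a unitary U commuting with T and V such that TV = UVT and VT* = UT*V. Then the subspace H_u = { h ∈ H : ||T^n h|| = ||h|| = ||T*^n h|| for all n ≥ 1 } is a reducing subspace for V. -/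
open ContinuousLinearMap

section Aux

variable {H : Type*} [NormedAddCommGroup H] [InnerProductSpace ℂ H] [CompleteSpace H]

/-- If `S` is a contraction and `‖S h‖ = ‖h‖`, then `S* S h = h`. -/
lemma aux_iso_fix (S : H →L[ℂ] H) (hS : ‖S‖ ≤ 1) (h : H) (hh : ‖S h‖ = ‖h‖) :
    adjoint S (S h) = h := by
  set g := adjoint S (S h) with hg
  have hre : RCLike.re (inner ℂ g h : ℂ) = ‖h‖ ^ 2 := by
    rw [hg, adjoint_inner_left, inner_self_eq_norm_sq, hh]
  have hgle : ‖g‖ ≤ ‖h‖ := by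
    calc ‖g‖ ≤ ‖adjoint S‖ * ‖S h‖ := le_opNorm _ _
      _ ≤ 1 * ‖h‖ := by
          have h1 : ‖adjoint S‖ ≤ 1 := by rw [← star_eq_adjoint, norm_star]; exact hS
          exact mul_le_mul h1 (le_of_eq hh) (norm_nonneg _) zero_le_one
      _ = ‖h‖ := one_mul _
  have key : ‖g - h‖ ^ 2 ≤ 0 := by
    have hns : ‖g - h‖ ^ 2 = ‖g‖ ^ 2 - 2 * RCLike.re (inner ℂ g h : ℂ) + ‖h‖ ^ 2 :=
      @norm_sub_sq ℂ _ _ _ _ g h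
    rw [hns, hre]
    nlinarith [norm_nonneg g, norm_nonneg h]
  have h0 : ‖g - h‖ = 0 := by
    nlinarith [norm_nonneg (g - h)]
  exact sub_eq_zero.mp (norm_eq_zero.mp h0)

lemma aux_adjoint_pow (S : H →L[ℂ] H) (n : ℕ) : adjoint (S ^ n) = (adjoint S) ^ n := by
  rw [← star_eq_adjoint, ← star_eq_adjoint, star_pow]

lemma aux_pow_norm_le_one (S : H →L[ℂ] H) (hS : ‖S‖ ≤ 1) (n : ℕ) : ‖S ^ n‖ ≤ 1 := by
  induction n with
  | zero => rw [pow_zero]; exact norm_id_le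
  | succ n ih =>
      calc ‖S ^ (n + 1)‖ = ‖S ^ n * S‖ := by rw [pow_succ]
        _ ≤ ‖S ^ n‖ * ‖S‖ := norm_mul_le _ _
        _ ≤ 1 * 1 := mul_le_mul ih hS (norm_nonneg _) zero_le_one
        _ = 1 := one_mul 1

/-- The sandwich lemma: if `W` "norm-commutes" with the powers of `T` and of `T*`,
then `W` preserves membership in the unitary part. -/
lemma aux_sandwich (T W : H →L[ℂ] H) (hT : ‖T‖ ≤ 1)
    (hW1 : ∀ (n : ℕ) (x : H), ‖(T ^ n) (W x)‖ = ‖W ((T ^ n) x)‖)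
    (hW2 : ∀ (n : ℕ) (x : H), ‖((adjoint T) ^ n) (W x)‖ = ‖W (((adjoint T) ^ n) x)‖)
    (h : H)
    (hh : ∀ n : ℕ, 1 ≤ n → ‖(T ^ n) h‖ = ‖h‖ ∧ ‖((adjoint T) ^ n) h‖ = ‖h‖) :
    ∀ n : ℕ, 1 ≤ n → ‖(T ^ n) (W h)‖ = ‖W h‖ ∧ ‖((adjoint T) ^ n) (W h)‖ = ‖W h‖ := by
  intro n hn
  have hT' : ‖adjoint T‖ ≤ 1 := by rw [← star_eq_adjoint, norm_star]; exact hT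
  have hTn : ‖T ^ n‖ ≤ 1 := aux_pow_norm_le_one T hT n
  have hT'n : ‖(adjoint T) ^ n‖ ≤ 1 := aux_pow_norm_le_one (adjoint T) hT' n
  -- equal-case fixed point facts
  have fix1 : ((adjoint T) ^ n) ((T ^ n) h) = h := by
    have := aux_iso_fix (T ^ n) hTn h (hh n hn).1
    rwa [aux_adjoint_pow] at this
  have fix2 : (T ^ n) (((adjoint T) ^ n) h) = h := by
    have := aux_iso_fix ((adjoint T) ^ n) hT'n h (hh n hn).2
    rwa [aux_adjoint_pow, adjoint_adjoint] at this
  constructor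
  · have le1 : ‖(T ^ n) (W h)‖ ≤ ‖W h‖ := by
      calc ‖(T ^ n) (W h)‖ ≤ ‖T ^ n‖ * ‖W h‖ := le_opNorm _ _
        _ ≤ 1 * ‖W h‖ := mul_le_mul_of_nonneg_right hTn (norm_nonneg _)
        _ = ‖W h‖ := one_mul _
    have ge1 : ‖W h‖ ≤ ‖(T ^ n) (W h)‖ := by
      calc ‖W h‖ = ‖W (((adjoint T) ^ n) ((T ^ n) h))‖ := by rw [fix1]
        _ = ‖((adjoint T) ^ n) (W ((T ^ n) h))‖ := (hW2 n _).symm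
        _ ≤ ‖(adjoint T) ^ n‖ * ‖W ((T ^ n) h)‖ := le_opNorm _ _
        _ ≤ 1 * ‖W ((T ^ n) h)‖ := mul_le_mul_of_nonneg_right hT'n (norm_nonneg _)
        _ = ‖W ((T ^ n) h)‖ := one_mul _
        _ = ‖(T ^ n) (W h)‖ := (hW1 n h).symm
    exact le_antisymm le1 ge1
  · have le2 : ‖((adjoint T) ^ n) (W h)‖ ≤ ‖W h‖ := by
      calc ‖((adjoint T) ^ n) (W h)‖ ≤ ‖(adjoint T) ^ n‖ * ‖W h‖ := le_opNorm _ _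
        _ ≤ 1 * ‖W h‖ := mul_le_mul_of_nonneg_right hT'n (norm_nonneg _)
        _ = ‖W h‖ := one_mul _
    have ge2 : ‖W h‖ ≤ ‖((adjoint T) ^ n) (W h)‖ := by
      calc ‖W h‖ = ‖W ((T ^ n) (((adjoint T) ^ n) h))‖ := by rw [fix2]
        _ = ‖(T ^ n) (W (((adjoint T) ^ n) h))‖ := (hW1 n _).symm
        _ ≤ ‖T ^ n‖ * ‖W (((adjoint T) ^ n) h)‖ := le_opNorm _ _
        _ ≤ 1 * ‖W (((adjoint T) ^ n) h)‖ := mul_le_mul_of_nonneg_right hTn (norm_nonneg _)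
        _ = ‖W (((adjoint T) ^ n) h)‖ := one_mul _
        _ = ‖((adjoint T) ^ n) (W h)‖ := (hW2 n h).symm
    exact le_antisymm le2 ge2

end Aux

/-- For a doubly twisted pair `(T, V)` with `T` a contraction, the unitary part
`H_u = { h : ‖T^n h‖ = ‖h‖ = ‖T*^n h‖ for all n ≥ 1 }` of the canonical decomposition of `T`
is a reducing subspace for `V` (it is invariant under both `V` and `V*`). -/
theorem canonical_unitary_part_reduces
    {H : Type*} [NormedAddCommGroup H] [InnerProductSpace ℂ H] [CompleteSpace H]
    (T V U : H →L[ℂ] H)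
    (hT : ‖T‖ ≤ 1)
    (hU : adjoint U ∘L U = 1 ∧ U ∘L adjoint U = 1)
    (hUT : U ∘L T = T ∘L U) (hUV : U ∘L V = V ∘L U)
    (hTV : T ∘L V = U ∘L (V ∘L T))
    (hVT : V ∘L adjoint T = U ∘L (adjoint T ∘L V))
    (Hu : Set H)
    (hHu : Hu = {h : H | ∀ n : ℕ, 1 ≤ n →
      ‖(T ^ n) h‖ = ‖h‖ ∧ ‖((adjoint T) ^ n) h‖ = ‖h‖}) :
    (∀ h ∈ Hu, V h ∈ Hu) ∧ (∀ h ∈ Hu, adjoint V h ∈ Hu) := by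
  set T' := adjoint T with hT'def
  set U' := adjoint U with hU'def
  set V' := adjoint V with hV'def
  -- pointwise unitarity of U
  have hU1pt : ∀ x : H, U' (U x) = x := by
    intro x
    have := DFunLike.congr_fun hU.1 x
    simpa using this
  have hU2pt : ∀ x : H, U (U' x) = x := by
    intro x
    have := DFunLike.congr_fun hU.2 x
    simpa using this
  have nU : ∀ x : H, ‖U x‖ = ‖x‖ := by
    intro x
    have h1 : (inner ℂ (U x) (U x) : ℂ) = inner ℂ x x := by
      rw [← adjoint_inner_left, ← hU'def, hU1pt]
    have h3 : ‖U x‖ ^ 2 = ‖x‖ ^ 2 := by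
      rw [← inner_self_eq_norm_sq (𝕜 := ℂ), ← inner_self_eq_norm_sq (𝕜 := ℂ), h1]
    nlinarith [norm_nonneg (U x), norm_nonneg x]
  have nU' : ∀ x : H, ‖U' x‖ = ‖x‖ := by
    intro x
    calc ‖U' x‖ = ‖U (U' x)‖ := (nU _).symm
      _ = ‖x‖ := by rw [hU2pt]
  have nUp : ∀ (n : ℕ) (x : H), ‖(U ^ n) x‖ = ‖x‖ := by
    intro n
    induction n with
    | zero => intro x; simp
    | succ n ih =>
        intro x
        have : (U ^ (n + 1)) x = U ((U ^ n) x) := by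
          rw [pow_succ']; rfl
        rw [this, nU, ih]
  have nU'p : ∀ (n : ℕ) (x : H), ‖(U' ^ n) x‖ = ‖x‖ := by
    intro n
    induction n with
    | zero => intro x; simp
    | succ n ih =>
        intro x
        have : (U' ^ (n + 1)) x = U' ((U' ^ n) x) := by
          rw [pow_succ']; rfl
        rw [this, nU', ih]
  -- generic pointwise power-commutation helper
  have pcomm : ∀ (A B : H →L[ℂ] H), A * B = B * A →
      ∀ (n : ℕ) (x : H), (A ^ n) (B x) = B ((A ^ n) x) := by
    intro A B hAB n x
    have hc : A ^ n * B = B * A ^ n := (Commute.pow_left hAB n)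
    calc (A ^ n) (B x) = (A ^ n * B) x := rfl
      _ = (B * A ^ n) x := by rw [hc]
      _ = B ((A ^ n) x) := rfl
  -- basic commutation relations (as `*` equalities)
  have cUT : U * T = T * U := by ext x; exact DFunLike.congr_fun hUT x
  have cT'U' : T' * U' = U' * T' := by
    have := congrArg adjoint hUT
    rw [adjoint_comp, adjoint_comp] at this
    ext x; exact DFunLike.congr_fun this x
  have cTU' : T * U' = U' * T := by
    ext x
    have h1 : U' (U (T (U' x))) = T (U' x) := hU1pt _
    have h2 : U (T (U' x)) = T (U (U' x)) := DFunLike.congr_fun hUT (U' x)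
    have h3 : U (U' x) = x := hU2pt x
    calc (T * U') x = T (U' x) := rfl
      _ = U' (U (T (U' x))) := h1.symm
      _ = U' (T (U (U' x))) := by rw [h2]
      _ = U' (T x) := by rw [h3]
      _ = (U' * T) x := rfl
  have appc : ∀ A B : H →L[ℂ] H, A * B = B * A → ∀ x, A (B x) = B (A x) :=
    fun A B hAB x => DFunLike.congr_fun hAB x
  have cT'U : T' * U = U * T' := by
    ext x
    calc (T' * U) x = T' (U x) := rfl
      _ = U (U' (T' (U x))) := (hU2pt _).symm
      _ = U (T' (U' (U x))) := by rw [appc T' U' cT'U' (U x)]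
      _ = U (T' x) := by rw [hU1pt]
      _ = (U * T') x := rfl
  have cV'U' : V' * U' = U' * V' := by
    have := congrArg adjoint hUV
    rw [adjoint_comp, adjoint_comp] at this
    ext x; exact DFunLike.congr_fun this x
  have cUV : U * V = V * U := by ext x; exact DFunLike.congr_fun hUV x
  have cVU' : V * U' = U' * V := by
    ext x
    have h2 : U (V (U' x)) = V (U (U' x)) := DFunLike.congr_fun hUV (U' x)
    calc (V * U') x = V (U' x) := rfl
      _ = U' (U (V (U' x))) := (hU1pt _).symm
      _ = U' (V (U (U' x))) := by rw [h2]
      _ = U' (V x) := by rw [hU2pt]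
      _ = (U' * V) x := rfl
  have cV'U : V' * U = U * V' := by
    ext x
    calc (V' * U) x = V' (U x) := rfl
      _ = U (U' (V' (U x))) := (hU2pt _).symm
      _ = U (V' (U' (U x))) := by rw [appc V' U' cV'U' (U x)]
      _ = U (V' x) := by rw [hU1pt]
      _ = (U * V') x := rfl
  -- pointwise twisted relations
  have stepTV : ∀ x : H, T (V x) = U (V (T x)) := by
    intro x
    have := DFunLike.congr_fun hTV x
    simpa using this
  have stepVT' : ∀ x : H, V (T' x) = U (T' (V x)) := by
    intro x
    have := DFunLike.congr_fun hVT x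
    simpa [hT'def] using this
  have stepT'V : ∀ x : H, T' (V x) = U' (V (T' x)) := by
    intro x
    rw [stepVT' x, hU1pt]
  have stepTV' : ∀ x : H, T (V' x) = V' (T (U' x)) := by
    intro x
    have h1 := DFunLike.congr_fun (congrArg adjoint hVT) x
    simpa [adjoint_comp, hT'def, adjoint_adjoint, ← hU'def, ← hV'def] using h1
  have stepV'T' : ∀ x : H, V' (T' x) = T' (V' (U' x)) := by
    intro x
    have h1 := DFunLike.congr_fun (congrArg adjoint hTV) x
    simpa [adjoint_comp, adjoint_adjoint, ← hT'def, ← hU'def, ← hV'def] using h1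
  have stepT'V' : ∀ x : H, T' (V' x) = V' (T' (U x)) := by
    intro x
    rw [stepV'T' (U x), hU1pt]
  -- power identities
  have c1 : ∀ (n : ℕ) (x : H), (T ^ n) (V x) = (U ^ n) (V ((T ^ n) x)) := by
    intro n
    induction n with
    | zero => intro x; simp
    | succ n ih =>
        intro x
        have e1 : (T ^ (n + 1)) (V x) = (T ^ n) (T (V x)) := by rw [pow_succ]; rfl
        have e2 : (T ^ n) (T x) = (T ^ (n + 1)) x := by rw [pow_succ]; rfl
        rw [e1, stepTV x, pcomm T U cUT.symm n (V (T x)), ih (T x), e2]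
        rw [show U ((U ^ n) (V ((T ^ (n+1)) x))) = (U ^ (n+1)) (V ((T ^ (n+1)) x)) from by
          rw [pow_succ' U n]; rfl]
  have c2 : ∀ (n : ℕ) (x : H), (T' ^ n) (V x) = (U' ^ n) (V ((T' ^ n) x)) := by
    intro n
    induction n with
    | zero => intro x; simp
    | succ n ih =>
        intro x
        have e1 : (T' ^ (n + 1)) (V x) = (T' ^ n) (T' (V x)) := by rw [pow_succ]; rfl
        have e2 : (T' ^ n) (T' x) = (T' ^ (n + 1)) x := by rw [pow_succ]; rfl
        rw [e1, stepT'V x, pcomm T' U' cT'U' n (V (T' x)), ih (T' x), e2]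
        rw [show U' ((U' ^ n) (V ((T' ^ (n+1)) x))) = (U' ^ (n+1)) (V ((T' ^ (n+1)) x)) from by
          rw [pow_succ' U' n]; rfl]
  have c3 : ∀ (n : ℕ) (x : H), (T ^ n) (V' x) = V' ((T ^ n) ((U' ^ n) x)) := by
    intro n
    induction n with
    | zero => intro x; simp
    | succ n ih =>
        intro x
        have e1 : (T ^ (n + 1)) (V' x) = (T ^ n) (T (V' x)) := by rw [pow_succ]; rfl
        rw [e1, stepTV' x, ih (T (U' x))]
        -- goal: V' ((T ^ n) ((U' ^ n) (T (U' x)))) = V' ((T ^ (n+1)) ((U' ^ (n+1)) x))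
        have h1 : (U' ^ n) (T (U' x)) = T ((U' ^ n) (U' x)) := pcomm U' T cTU'.symm n (U' x)
        have h2 : (U' ^ n) (U' x) = (U' ^ (n + 1)) x := by rw [pow_succ]; rfl
        have h3 : (T ^ n) (T ((U' ^ (n + 1)) x)) = (T ^ (n + 1)) ((U' ^ (n + 1)) x) := by
          rw [pow_succ T n]; rfl
        rw [h1, h2, h3]
  have c4 : ∀ (n : ℕ) (x : H), (T' ^ n) (V' x) = V' ((T' ^ n) ((U ^ n) x)) := by
    intro n
    induction n with
    | zero => intro x; simp
    | succ n ih =>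
        intro x
        have e1 : (T' ^ (n + 1)) (V' x) = (T' ^ n) (T' (V' x)) := by rw [pow_succ]; rfl
        rw [e1, stepT'V' x, ih (T' (U x))]
        have h1 : (U ^ n) (T' (U x)) = T' ((U ^ n) (U x)) := pcomm U T' cT'U.symm n (U x)
        have h2 : (U ^ n) (U x) = (U ^ (n + 1)) x := by rw [pow_succ]; rfl
        have h3 : (T' ^ n) (T' ((U ^ (n + 1)) x)) = (T' ^ (n + 1)) ((U ^ (n + 1)) x) := by
          rw [pow_succ T' n]; rfl
        rw [h1, h2, h3]
  -- norm-commutation hypotheses for the sandwich lemma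
  have hV1 : ∀ (n : ℕ) (x : H), ‖(T ^ n) (V x)‖ = ‖V ((T ^ n) x)‖ := by
    intro n x; rw [c1 n x, nUp]
  have hV2 : ∀ (n : ℕ) (x : H), ‖(T' ^ n) (V x)‖ = ‖V ((T' ^ n) x)‖ := by
    intro n x; rw [c2 n x, nU'p]
  have hV'1 : ∀ (n : ℕ) (x : H), ‖(T ^ n) (V' x)‖ = ‖V' ((T ^ n) x)‖ := by
    intro n x
    rw [c3 n x]
    have h1 : (T ^ n) ((U' ^ n) x) = (U' ^ n) ((T ^ n) x) := by
      have hc : T ^ n * U' ^ n = U' ^ n * T ^ n := Commute.pow_pow cTU' n n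
      calc (T ^ n) ((U' ^ n) x) = (T ^ n * U' ^ n) x := rfl
        _ = (U' ^ n * T ^ n) x := by rw [hc]
        _ = (U' ^ n) ((T ^ n) x) := rfl
    rw [h1, ← pcomm U' V' cV'U'.symm n ((T ^ n) x), nU'p]
  have hV'2 : ∀ (n : ℕ) (x : H), ‖(T' ^ n) (V' x)‖ = ‖V' ((T' ^ n) x)‖ := by
    intro n x
    rw [c4 n x]
    have h1 : (T' ^ n) ((U ^ n) x) = (U ^ n) ((T' ^ n) x) := by
      have hc : T' ^ n * U ^ n = U ^ n * T' ^ n := Commute.pow_pow cT'U n n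
      calc (T' ^ n) ((U ^ n) x) = (T' ^ n * U ^ n) x := rfl
        _ = (U ^ n * T' ^ n) x := by rw [hc]
        _ = (U ^ n) ((T' ^ n) x) := rfl
    rw [h1, ← pcomm U V' cV'U.symm n ((T' ^ n) x), nUp]
  -- conclude
  subst hHu
  constructor
  · intro h hh
    exact aux_sandwich T V hT hV1 hV2 h hh
  · intro h hh
    exact aux_sandwich T V' hT hV'1 hV'2 h hh
end

section
/- Let V be an isometry and W a co-isometry on a Hilbert space H, and U a unitary commuting with V and W such that VW = UWV. Then W*V = UVW*, i.e., the pair (V, W) is doubly twisted. -/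
open ContinuousLinearMap

lemma aux_adjoint_comp_self_eq_zero
    {H : Type*} [NormedAddCommGroup H] [InnerProductSpace ℂ H] [CompleteSpace H]
    (T : H →L[ℂ] H) (h : adjoint T ∘L T = 0) : T = 0 := by
  ext x
  have h1 := ContinuousLinearMap.apply_norm_sq_eq_inner_adjoint_left (𝕜 := ℂ) T x
  rw [h] at h1
  simp only [ContinuousLinearMap.zero_apply, inner_zero_left, map_zero,
    pow_eq_zero_iff, norm_eq_zero, two_ne_zero, ne_eq, not_false_iff] at h1
  simpa using h1

/-- A twisted pair `(V, W)` with `V` an isometry and `W` a co-isometry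
is automatically doubly twisted: `W*V = UVW*`. -/
theorem twisted_isometry_coisometry_doubly_twisted
    {H : Type*} [NormedAddCommGroup H] [InnerProductSpace ℂ H] [CompleteSpace H]
    (V W U : H →L[ℂ] H)
    (hV : adjoint V ∘L V = 1)
    (hW : W ∘L adjoint W = 1)
    (hU : adjoint U ∘L U = 1 ∧ U ∘L adjoint U = 1)
    (hUV : U ∘L V = V ∘L U) (hUW : U ∘L W = W ∘L U)
    (hVW : V ∘L W = U ∘L (W ∘L V)) :
    adjoint W ∘L V = U ∘L (V ∘L adjoint W) := by
  set A := adjoint W ∘L V with hA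
  set B := U ∘L (V ∘L adjoint W) with hB
  obtain ⟨hU1, hU2⟩ := hU
  -- U W V = V W
  have hUWV : U ∘L (W ∘L V) = V ∘L W := hVW.symm
  -- A*A = 1
  have hAA : adjoint A ∘L A = 1 := by
    rw [hA, adjoint_comp, adjoint_adjoint]
    calc (adjoint V ∘L W) ∘L (adjoint W ∘L V)
        = adjoint V ∘L ((W ∘L adjoint W) ∘L V) := by
          simp only [comp_assoc]
      _ = 1 := by rw [hW, one_def, id_comp, hV]; rfl
  -- B*B = 1
  have hBB : adjoint B ∘L B = 1 := by
    rw [hB, adjoint_comp, adjoint_comp, adjoint_adjoint]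
    calc (W ∘L adjoint V) ∘L adjoint U ∘L (U ∘L (V ∘L adjoint W))
        = W ∘L (adjoint V ∘L ((adjoint U ∘L U) ∘L (V ∘L adjoint W))) := by
          simp only [comp_assoc]
      _ = W ∘L (adjoint V ∘L (V ∘L adjoint W)) := by
          rw [hU1, one_def, id_comp]
      _ = (W ∘L (adjoint V ∘L V)) ∘L adjoint W := by
          simp only [comp_assoc]
      _ = 1 := by rw [hV, one_def, comp_id, hW]; rfl
  -- A*B = 1
  have hAB : adjoint A ∘L B = 1 := by
    rw [hA, hB, adjoint_comp, adjoint_adjoint]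
    calc (adjoint V ∘L W) ∘L (U ∘L (V ∘L adjoint W))
        = adjoint V ∘L ((U ∘L (W ∘L V)) ∘L adjoint W) := by
          rw [comp_assoc, ← comp_assoc W U, ← hUW]
          simp only [comp_assoc]
      _ = adjoint V ∘L ((V ∘L W) ∘L adjoint W) := by rw [hUWV]
      _ = (adjoint V ∘L V) ∘L (W ∘L adjoint W) := by simp only [comp_assoc]
      _ = 1 := by rw [hV, hW, one_def, id_comp]
  -- B*A = 1
  have hBA : adjoint B ∘L A = 1 := by
    have : adjoint (adjoint A ∘L B) = adjoint B ∘L A := by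
      rw [adjoint_comp, adjoint_adjoint]
    rw [← this, hAB]
    ext x
    refine ext_inner_left ℂ fun w => ?_
    simp [adjoint_inner_right]
  have hzero : A - B = 0 := by
    apply aux_adjoint_comp_self_eq_zero
    rw [map_sub, sub_comp, comp_sub, comp_sub, hAA, hAB, hBA, hBB]
    abel
  exact sub_eq_zero.mp hzero
end

section
/- Let (V_1, V_2) be a pair of twisted isometries on H with twist U, and V = V_1V_2. Then V_i* W = W_j for {i, j} = {1, 2}, where W = H ⊖ VH and W_j = H ⊖ V_j H. -/
set_option maxHeartbeats 1000000

open ContinuousLinearMap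

/-- For twisted isometries with `V = V₁V₂`, `Vᵢ* W = W_j` for `{i,j} = {1,2}`,
where `W = ker V*` and `W_j = ker V_j*`. -/
theorem adjoint_image_of_wandering_space
    {H : Type*} [NormedAddCommGroup H] [InnerProductSpace ℂ H] [CompleteSpace H]
    (V₁ V₂ U V : H →L[ℂ] H)
    (hV₁ : ∀ h : H, ‖V₁ h‖ = ‖h‖) (hV₂ : ∀ h : H, ‖V₂ h‖ = ‖h‖)
    (hU : adjoint U ∘L U = 1 ∧ U ∘L adjoint U = 1)
    (hUV₁ : U ∘L V₁ = V₁ ∘L U) (hUV₂ : U ∘L V₂ = V₂ ∘L U)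
    (htw : V₁ ∘L V₂ = U ∘L (V₂ ∘L V₁))
    (hV : V = V₁ ∘L V₂) :
    adjoint V₁ '' (LinearMap.ker (adjoint V : H →ₗ[ℂ] H) : Set H) =
      (LinearMap.ker (adjoint V₂ : H →ₗ[ℂ] H) : Set H) ∧
    adjoint V₂ '' (LinearMap.ker (adjoint V : H →ₗ[ℂ] H) : Set H) =
      (LinearMap.ker (adjoint V₁ : H →ₗ[ℂ] H) : Set H) := by
  have h1 : adjoint V₁ ∘L V₁ = 1 := (norm_map_iff_adjoint_comp_self V₁).mp hV₁
  have h2 : adjoint V₂ ∘L V₂ = 1 := (norm_map_iff_adjoint_comp_self V₂).mp hV₂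
  have hA₁V₁ : ∀ z : H, adjoint V₁ (V₁ z) = z := fun z => by
    have := congrArg (fun T : H →L[ℂ] H => T z) h1; simpa using this
  have hA₂V₂ : ∀ z : H, adjoint V₂ (V₂ z) = z := fun z => by
    have := congrArg (fun T : H →L[ℂ] H => T z) h2; simpa using this
  have hU'U : ∀ z : H, adjoint U (U z) = z := fun z => by
    have := congrArg (fun T : H →L[ℂ] H => T z) hU.1; simpa using this
  have hUU' : ∀ z : H, U (adjoint U z) = z := fun z => by
    have := congrArg (fun T : H →L[ℂ] H => T z) hU.2; simpa using this
  have hVx : ∀ z : H, adjoint V z = adjoint V₂ (adjoint V₁ z) := fun z => by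
    rw [hV, adjoint_comp]; rfl
  -- adjoint of twist relation, pointwise
  have htwadj : ∀ z : H,
      adjoint V₂ (adjoint V₁ z) = adjoint V₁ (adjoint V₂ (adjoint U z)) := fun z => by
    have h := congrArg adjoint htw
    rw [adjoint_comp, adjoint_comp, adjoint_comp] at h
    have := congrArg (fun T : H →L[ℂ] H => T z) h
    simpa using this
  -- adjoint U commutes with adjoint V₁
  have hU'A₁ : ∀ z : H, adjoint U (adjoint V₁ z) = adjoint V₁ (adjoint U z) := fun z => by
    have h := congrArg adjoint hUV₁
    rw [adjoint_comp, adjoint_comp] at h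
    have := congrArg (fun T : H →L[ℂ] H => T z) h
    simpa using this.symm
  -- adjoint U commutes with adjoint V₂
  have hU'A₂ : ∀ z : H, adjoint U (adjoint V₂ z) = adjoint V₂ (adjoint U z) := fun z => by
    have h := congrArg adjoint hUV₂
    rw [adjoint_comp, adjoint_comp] at h
    have := congrArg (fun T : H →L[ℂ] H => T z) h
    simpa using this.symm
  -- U commutes with adjoint V₁
  have hUA₁ : ∀ z : H, U (adjoint V₁ z) = adjoint V₁ (U z) := fun z => by
    calc U (adjoint V₁ z) = U (adjoint V₁ (adjoint U (U z))) := by rw [hU'U]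
      _ = U (adjoint U (adjoint V₁ (U z))) := by rw [hU'A₁]
      _ = adjoint V₁ (U z) := hUU' _
  -- U commutes with adjoint V₂
  have hUA₂ : ∀ z : H, U (adjoint V₂ z) = adjoint V₂ (U z) := fun z => by
    calc U (adjoint V₂ z) = U (adjoint V₂ (adjoint U (U z))) := by rw [hU'U]
      _ = U (adjoint U (adjoint V₂ (U z))) := by rw [hU'A₂]
      _ = adjoint V₂ (U z) := hUU' _
  -- adjoint U commutes with V₂
  have hU'V₂ : ∀ z : H, adjoint U (V₂ z) = V₂ (adjoint U z) := fun z => by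
    have hc : ∀ w : H, U (V₂ w) = V₂ (U w) := fun w => by
      have := congrArg (fun T : H →L[ℂ] H => T w) hUV₂
      simpa using this
    calc adjoint U (V₂ z) = adjoint U (V₂ (U (adjoint U z))) := by rw [hUU']
      _ = adjoint U (U (V₂ (adjoint U z))) := by rw [hc]
      _ = V₂ (adjoint U z) := hU'U _
  constructor
  · apply Set.eq_of_subset_of_subset
    · rintro _ ⟨x, hx, rfl⟩
      simp only [SetLike.mem_coe, LinearMap.mem_ker, coe_coe] at hx ⊢
      rw [← hVx]; exact hx
    · intro y hy
      simp only [SetLike.mem_coe, LinearMap.mem_ker, coe_coe] at hy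
      refine ⟨V₁ y, ?_, hA₁V₁ y⟩
      simp only [SetLike.mem_coe, LinearMap.mem_ker, coe_coe]
      rw [hVx, hA₁V₁]; exact hy
  · apply Set.eq_of_subset_of_subset
    · rintro _ ⟨x, hx, rfl⟩
      simp only [SetLike.mem_coe, LinearMap.mem_ker, coe_coe] at hx ⊢
      have key : adjoint V₁ (adjoint V₂ x) = adjoint V₂ (adjoint V₁ (U x)) := by
        have := htwadj (U x)
        rw [hU'U] at this
        exact this.symm
      rw [key, ← hUA₁, ← hUA₂, ← hVx, hx, map_zero]
    · intro y hy
      simp only [SetLike.mem_coe, LinearMap.mem_ker, coe_coe] at hy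
      refine ⟨V₂ y, ?_, hA₂V₂ y⟩
      simp only [SetLike.mem_coe, LinearMap.mem_ker, coe_coe]
      rw [hVx, htwadj, hU'V₂, hA₂V₂, ← hU'A₁, hy, map_zero]
end

section
/- Let (V_1, V_2) be a pair of twisted isometries on H with twist U, and V = V_1V_2. Then the unitary part H_u(V) = ⋂_{n≥0} V^n H of the Wold decomposition of V is contained in H_u(V_1) and in H_u(V_2). -/
open ContinuousLinearMap

/-- For twisted isometries with `V = V₁V₂`, the unitary part
`H_u(V) = ⋂ₙ VⁿH` of the Wold decomposition of `V` is contained in `H_u(V₁)` and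
`H_u(V₂)`. -/
theorem unitary_part_of_product_subset
    {H : Type*} [NormedAddCommGroup H] [InnerProductSpace ℂ H] [CompleteSpace H]
    (V₁ V₂ U V : H →L[ℂ] H)
    (hV₁ : ∀ h : H, ‖V₁ h‖ = ‖h‖) (hV₂ : ∀ h : H, ‖V₂ h‖ = ‖h‖)
    (hU : adjoint U ∘L U = 1 ∧ U ∘L adjoint U = 1)
    (hUV₁ : U ∘L V₁ = V₁ ∘L U) (hUV₂ : U ∘L V₂ = V₂ ∘L U)
    (htw : V₁ ∘L V₂ = U ∘L (V₂ ∘L V₁))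
    (hV : V = V₁ ∘L V₂) :
    (⋂ n : ℕ, Set.range (V ^ n : H →L[ℂ] H)) ⊆
        (⋂ n : ℕ, Set.range (V₁ ^ n : H →L[ℂ] H)) ∧
    (⋂ n : ℕ, Set.range (V ^ n : H →L[ℂ] H)) ⊆
        (⋂ n : ℕ, Set.range (V₂ ^ n : H →L[ℂ] H)) := by
  set S : H →L[ℂ] H := adjoint U with hS
  obtain ⟨hSU, hUS⟩ := hU
  have hSU' : S * U = 1 := hSU
  have hUS' : U * S = 1 := hUS
  have h1 : U * V₁ = V₁ * U := hUV₁
  have h2 : U * V₂ = V₂ * U := hUV₂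
  have htw' : V₁ * V₂ = U * (V₂ * V₁) := htw
  have hVm : V = V₁ * V₂ := hV
  -- S commutes with V₁ and V₂
  have hs1 : S * V₁ = V₁ * S := by
    calc S * V₁ = S * V₁ * (U * S) := by rw [hUS', mul_one]
    _ = S * (V₁ * U) * S := by rw [← mul_assoc, mul_assoc S V₁ U]
    _ = S * (U * V₁) * S := by rw [h1]
    _ = (S * U) * V₁ * S := by rw [mul_assoc S U V₁]
    _ = V₁ * S := by rw [hSU', one_mul]
  have hs2 : S * V₂ = V₂ * S := by
    calc S * V₂ = S * V₂ * (U * S) := by rw [hUS', mul_one]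
    _ = S * (V₂ * U) * S := by rw [← mul_assoc, mul_assoc S V₂ U]
    _ = S * (U * V₂) * S := by rw [h2]
    _ = (S * U) * V₂ * S := by rw [mul_assoc S U V₂]
    _ = V₂ * S := by rw [hSU', one_mul]
  have hsw : V₂ * V₁ = S * (V₁ * V₂) := by
    rw [htw', ← mul_assoc, hSU', one_mul]
  have hc1 : Commute S V₁ := hs1
  have hc2 : Commute S V₂ := hs2
  have hcU1 : Commute U V₁ := h1
  have hcU2 : Commute U V₂ := h2
  -- key commutation lemmas for powers
  have lemA : ∀ n : ℕ, V₂ ^ n * V₁ = S ^ n * (V₁ * V₂ ^ n) := by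
    intro n
    induction n with
    | zero => simp
    | succ n ih =>
      calc V₂ ^ (n + 1) * V₁ = V₂ * (V₂ ^ n * V₁) := by
            rw [pow_succ', mul_assoc]
        _ = V₂ * (S ^ n * (V₁ * V₂ ^ n)) := by rw [ih]
        _ = (V₂ * S ^ n) * (V₁ * V₂ ^ n) := by rw [mul_assoc]
        _ = (S ^ n * V₂) * (V₁ * V₂ ^ n) := by rw [(hc2.symm.pow_right n).eq]
        _ = S ^ n * ((V₂ * V₁) * V₂ ^ n) := by rw [mul_assoc, mul_assoc]
        _ = S ^ n * (S * (V₁ * V₂) * V₂ ^ n) := by rw [hsw]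
        _ = S ^ (n + 1) * (V₁ * V₂ ^ (n + 1)) := by
            rw [pow_succ, pow_succ']
            simp only [mul_assoc]
  have lemA' : ∀ n : ℕ, V₁ ^ n * V₂ = U ^ n * (V₂ * V₁ ^ n) := by
    intro n
    induction n with
    | zero => simp
    | succ n ih =>
      calc V₁ ^ (n + 1) * V₂ = V₁ * (V₁ ^ n * V₂) := by
            rw [pow_succ', mul_assoc]
        _ = V₁ * (U ^ n * (V₂ * V₁ ^ n)) := by rw [ih]
        _ = (V₁ * U ^ n) * (V₂ * V₁ ^ n) := by rw [mul_assoc]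
        _ = (U ^ n * V₁) * (V₂ * V₁ ^ n) := by rw [(hcU1.pow_left n).eq]
        _ = U ^ n * ((V₁ * V₂) * V₁ ^ n) := by rw [mul_assoc, mul_assoc]
        _ = U ^ n * (U * (V₂ * V₁) * V₁ ^ n) := by rw [htw']
        _ = U ^ (n + 1) * (V₂ * V₁ ^ (n + 1)) := by
            rw [pow_succ, pow_succ']
            simp only [mul_assoc]
  have lemB : ∀ n : ℕ, ∃ k : ℕ, V ^ n = S ^ k * (V₁ ^ n * V₂ ^ n) := by
    intro n
    induction n with
    | zero => exact ⟨0, by simp⟩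
    | succ n ih =>
      obtain ⟨k, hk⟩ := ih
      refine ⟨k + n, ?_⟩
      calc V ^ (n + 1) = V ^ n * (V₁ * V₂) := by rw [pow_succ, hVm]
        _ = S ^ k * (V₁ ^ n * V₂ ^ n) * (V₁ * V₂) := by rw [hk]
        _ = S ^ k * (V₁ ^ n * (V₂ ^ n * V₁) * V₂) := by
            simp only [mul_assoc]
        _ = S ^ k * (V₁ ^ n * (S ^ n * (V₁ * V₂ ^ n)) * V₂) := by rw [lemA n]
        _ = S ^ k * ((V₁ ^ n * S ^ n) * (V₁ * V₂ ^ n) * V₂) := by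
            simp only [mul_assoc]
        _ = S ^ k * ((S ^ n * V₁ ^ n) * (V₁ * V₂ ^ n) * V₂) := by
            rw [(hc1.pow_pow n n).symm.eq]
        _ = S ^ (k + n) * (V₁ ^ (n + 1) * V₂ ^ (n + 1)) := by
            rw [pow_add, pow_succ, pow_succ]
            simp only [mul_assoc]
  have lemB' : ∀ n : ℕ, ∃ k : ℕ, V ^ n = U ^ k * (V₂ ^ n * V₁ ^ n) := by
    intro n
    induction n with
    | zero => exact ⟨0, by simp⟩
    | succ n ih =>
      obtain ⟨k, hk⟩ := ih
      refine ⟨k + n + 1, ?_⟩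
      calc V ^ (n + 1) = V ^ n * (V₁ * V₂) := by rw [pow_succ, hVm]
        _ = U ^ k * (V₂ ^ n * V₁ ^ n) * (U * (V₂ * V₁)) := by rw [hk, htw']
        _ = U ^ k * (V₂ ^ n * ((V₁ ^ n * U) * V₂ * V₁)) := by
            simp only [mul_assoc]
        _ = U ^ k * (V₂ ^ n * ((U * V₁ ^ n) * V₂ * V₁)) := by
            rw [(hcU1.pow_right n).eq]
        _ = U ^ k * (V₂ ^ n * (U * (V₁ ^ n * V₂) * V₁)) := by
            simp only [mul_assoc]
        _ = U ^ k * (V₂ ^ n * (U * (U ^ n * (V₂ * V₁ ^ n)) * V₁)) := by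
            rw [lemA' n]
        _ = U ^ k * ((V₂ ^ n * (U * U ^ n)) * (V₂ * V₁ ^ n) * V₁) := by
            simp only [mul_assoc]
        _ = U ^ k * (((U * U ^ n) * V₂ ^ n) * (V₂ * V₁ ^ n) * V₁) := by
            rw [((hcU2.mul_left (hcU2.pow_left n).symm.symm).pow_right n).symm.eq]
        _ = U ^ (k + n + 1) * (V₂ ^ (n + 1) * V₁ ^ (n + 1)) := by
            rw [pow_add, pow_add, pow_one, pow_succ, pow_succ']
            simp only [mul_assoc]
            rw [← mul_assoc U (U ^ n), ← pow_succ' U n, ← mul_assoc (U ^ n) U,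
              ← pow_succ U n, ← pow_succ V₁ n, ← pow_succ' V₁ n]
  constructor
  · intro x hx
    simp only [Set.mem_iInter, Set.mem_range] at hx ⊢
    intro n
    obtain ⟨y, hy⟩ := hx n
    obtain ⟨k, hk⟩ := lemB n
    refine ⟨(S ^ k * V₂ ^ n) y, ?_⟩
    have : (V₁ ^ n * (S ^ k * V₂ ^ n)) y = x := by
      rw [← hy, hk]
      have : V₁ ^ n * (S ^ k * V₂ ^ n) = S ^ k * (V₁ ^ n * V₂ ^ n) := by
        rw [← mul_assoc, (hc1.pow_pow k n).symm.eq, mul_assoc]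
      rw [this]
    simpa [ContinuousLinearMap.mul_apply] using this
  · intro x hx
    simp only [Set.mem_iInter, Set.mem_range] at hx ⊢
    intro n
    obtain ⟨y, hy⟩ := hx n
    obtain ⟨k, hk⟩ := lemB' n
    refine ⟨(U ^ k * V₁ ^ n) y, ?_⟩
    have : (V₂ ^ n * (U ^ k * V₁ ^ n)) y = x := by
      rw [← hy, hk]
      have : V₂ ^ n * (U ^ k * V₁ ^ n) = U ^ k * (V₂ ^ n * V₁ ^ n) := by
        rw [← mul_assoc, (hcU2.pow_pow k n).symm.eq, mul_assoc]
      rw [this]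
    simpa [ContinuousLinearMap.mul_apply] using this
end

section
/- Let (V_1, V_2) be a pair of twisted isometries on H with twist U such that V_1(ker V_2*) ⊆ ker V_2*. Then (V_1, V_2) is doubly twisted: V_2*V_1 = UV_1V_2*. -/
open ContinuousLinearMap

/-- If `(V₁, V₂)` are twisted isometries with twist `U` and
`V₁(ker V₂*) ⊆ ker V₂*`, then the pair is doubly twisted: `V₂*V₁ = UV₁V₂*`. -/
theorem invariant_wandering_implies_doubly_twisted
    {H : Type*} [NormedAddCommGroup H] [InnerProductSpace ℂ H] [CompleteSpace H]
    (V₁ V₂ U : H →L[ℂ] H)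
    (hV₁ : ∀ h : H, ‖V₁ h‖ = ‖h‖) (hV₂ : ∀ h : H, ‖V₂ h‖ = ‖h‖)
    (hU : adjoint U ∘L U = 1 ∧ U ∘L adjoint U = 1)
    (hUV₁ : U ∘L V₁ = V₁ ∘L U) (hUV₂ : U ∘L V₂ = V₂ ∘L U)
    (htw : V₁ ∘L V₂ = U ∘L (V₂ ∘L V₁))
    (hinv : ∀ x ∈ LinearMap.ker (adjoint V₂ : H →ₗ[ℂ] H), V₁ x ∈ LinearMap.ker (adjoint V₂ : H →ₗ[ℂ] H)) :
    adjoint V₂ ∘L V₁ = U ∘L (V₁ ∘L adjoint V₂) := by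
  -- V₂ preserves inner products
  have hinner : ∀ x y : H, inner ℂ (V₂ x) (V₂ y) = (inner ℂ x y : ℂ) := fun x y =>
    (⟨V₂.toLinearMap, hV₂⟩ : H →ₗᵢ[ℂ] H).inner_map_map x y
  -- V₂* V₂ = 1
  have hVV : ∀ x : H, adjoint V₂ (V₂ x) = x := by
    intro x
    apply ext_inner_right ℂ
    intro z
    rw [adjoint_inner_left, hinner]
  set A := adjoint V₂ ∘L V₁ - U ∘L (V₁ ∘L adjoint V₂) with hA
  -- A vanishes on range V₂
  have hrange : LinearMap.range (V₂ : H →ₗ[ℂ] H) ≤ LinearMap.ker (A : H →ₗ[ℂ] H) := by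
    rintro x ⟨g, rfl⟩
    have h1 : V₁ (V₂ g) = U (V₂ (V₁ g)) := by
      have := ContinuousLinearMap.ext_iff.mp htw g
      simpa using this
    have h2 : U (V₂ (V₁ g)) = V₂ (U (V₁ g)) := by
      have := ContinuousLinearMap.ext_iff.mp hUV₂ (V₁ g)
      simpa using this
    simp only [LinearMap.mem_ker, hA, ContinuousLinearMap.coe_coe, sub_apply, coe_comp', Function.comp_apply]
    rw [h1, h2, hVV, hVV, sub_self]
  set K := (LinearMap.range (V₂ : H →ₗ[ℂ] H)).topologicalClosure with hK
  have hKle : K ≤ LinearMap.ker (A : H →ₗ[ℂ] H) :=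
    Submodule.topologicalClosure_minimal _ hrange (ContinuousLinearMap.isClosed_ker A)
  -- elements of Kᗮ are killed by adjoint V₂
  have hadj0 : ∀ z ∈ Kᗮ, adjoint V₂ z = 0 := by
    intro z hz
    have hz' : z ∈ (LinearMap.range (V₂ : H →ₗ[ℂ] H))ᗮ :=
      Submodule.orthogonal_le (Submodule.le_topologicalClosure _) hz
    apply ext_inner_right ℂ
    intro y
    rw [adjoint_inner_left, inner_zero_left]
    rw [← inner_conj_symm]
    have : (inner ℂ z (V₂ y) : ℂ) = 0 := by
      have := hz' (V₂ y) ⟨y, rfl⟩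
      rwa [inner_eq_zero_symm] at this
    rw [inner_conj_symm, this]
  have hKorth : ∀ z ∈ Kᗮ, A z = 0 := by
    intro z hz
    have h0 : adjoint V₂ z = 0 := hadj0 z hz
    have h1 : V₁ z ∈ LinearMap.ker (adjoint V₂ : H →ₗ[ℂ] H) := hinv z (LinearMap.mem_ker.mpr h0)
    simp only [hA, sub_apply, coe_comp', Function.comp_apply, h0,
      (id (LinearMap.mem_ker.mp h1) : adjoint V₂ (V₁ z) = 0), map_zero, sub_zero]
  have hA0 : A = 0 := by
    ext h
    obtain ⟨y, hy, z, hz, rfl⟩ := Submodule.exists_add_mem_mem_orthogonal (K := K) h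
    simp only [map_add, zero_apply]
    rw [(id (LinearMap.mem_ker.mp (hKle hy)) : A y = 0), hKorth z hz, add_zero]
  have := sub_eq_zero.mp hA0
  exact this
end

section
/- Let (T, V) be a pair of twisted operators on H with twist U (TV = UVT, U unitary commuting with T and V) such that T is a contraction whose completely non-unitary part lies in C_{0·} (respectively C_{·0}). If H = H_u ⊕ H_{¬u} is the canonical decomposition of T, then H_{¬u} (respectively H_u) is invariant under V. -/
open ContinuousLinearMap Filter

lemma twisted_aux
    {H : Type*} [NormedAddCommGroup H] [InnerProductSpace ℂ H] [CompleteSpace H]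
    (T V U : H →L[ℂ] H)
    (hUiso : ∀ y : H, ‖U y‖ = ‖y‖)
    (hUT : U * T = T * U)
    (hTV : T * V = U * (V * T))
    (M : Submodule ℂ H) (hMclosed : IsClosed (M : Set H))
    (hTM : ∀ x ∈ M, T x ∈ M) (hTMperp : ∀ x ∈ Mᗮ, T x ∈ Mᗮ)
    (hiso : ∀ x ∈ M, ‖T x‖ = ‖x‖)
    (hC : ∀ h ∈ Mᗮ, Tendsto (fun n : ℕ => (T ^ n) h) atTop (nhds 0)) :
    ∀ x ∈ Mᗮ, V x ∈ Mᗮ := by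
  intro x hx
  haveI : CompleteSpace M := hMclosed.completeSpace_coe
  -- intertwining: T^n V = U^n (V T^n)
  have hcomm : ∀ n : ℕ, ∀ z : H, (T ^ n) (U z) = U ((T ^ n) z) := by
    intro n z
    have h2 : Commute (T ^ n) U := Commute.pow_left hUT.symm n
    exact congrArg (fun A : H →L[ℂ] H => A z) h2.eq
  have hpow : ∀ n : ℕ, ∀ y : H, (T ^ n) (V y) = (U ^ n) (V ((T ^ n) y)) := by
    intro n
    induction n with
    | zero => intro y; simp
    | succ n ih =>
      intro y
      have e1 : (T ^ (n+1)) (V y) = (T ^ n) (T (V y)) := by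
        rw [pow_succ]; rfl
      have e2 : T (V y) = U (V (T y)) := congrArg (fun A : H →L[ℂ] H => A y) hTV
      rw [e1, e2, hcomm n, ih (T y)]
      have e3 : (T ^ n) (T y) = (T ^ (n+1)) y := by rw [pow_succ]; rfl
      rw [e3, pow_succ' U n]
      rfl
  -- T^n (V x) → 0
  have hVx : Tendsto (fun n : ℕ => (T ^ n) (V x)) atTop (nhds 0) := by
    have hUniso : ∀ n : ℕ, ∀ z : H, ‖(U ^ n) z‖ = ‖z‖ := by
      intro n
      induction n with
      | zero => intro z; simp
      | succ n ih =>
        intro z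
        rw [pow_succ]
        calc ‖(U ^ n * U) z‖ = ‖(U ^ n) (U z)‖ := rfl
          _ = ‖U z‖ := ih _
          _ = ‖z‖ := hUiso z
    apply squeeze_zero_norm (a := fun n => ‖V‖ * ‖(T ^ n) x‖)
    · intro n
      rw [hpow n x, hUniso n]
      exact V.le_opNorm _
    · have := (hC x hx).norm
      simpa using (this.const_mul ‖V‖)
  -- decompose V x
  set p : H := (M.orthogonalProjectionOnto (V x) : H) with hp
  set q : H := (Mᗮ.orthogonalProjectionOnto (V x) : H) with hq
  have hdec : p + q = V x := M.starProjection_add_starProjection_orthogonal (V x)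
  have hpM : p ∈ M := (M.orthogonalProjectionOnto (V x)).2
  have hqM : q ∈ Mᗮ := (Mᗮ.orthogonalProjectionOnto (V x)).2
  have hTn : ∀ n : ℕ, (T ^ n) p ∈ M ∧ (T ^ n) q ∈ Mᗮ ∧ ‖(T ^ n) p‖ = ‖p‖ := by
    intro n
    induction n with
    | zero => simp [hpM, hqM]
    | succ n ih =>
      have e : ∀ z : H, (T ^ (n+1)) z = T ((T ^ n) z) := by
        intro z; rw [pow_succ']; rfl
      refine ⟨?_, ?_, ?_⟩
      · rw [e]; exact hTM _ ih.1
      · rw [e]; exact hTMperp _ ih.2.1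
      · rw [e, hiso _ ih.1, ih.2.2]
  have hple : ∀ n : ℕ, ‖p‖ ≤ ‖(T ^ n) (V x)‖ := by
    intro n
    obtain ⟨h1, h2, h3⟩ := hTn n
    have hinner : inner ℂ ((T ^ n) p) ((T ^ n) q) = 0 :=
      Submodule.inner_right_of_mem_orthogonal h1 h2
    have e : (T ^ n) (V x) = (T ^ n) p + (T ^ n) q := by
      rw [← hdec, map_add]
    have := norm_add_sq_eq_norm_sq_add_norm_sq_of_inner_eq_zero _ _ hinner
    rw [← e] at this
    nlinarith [norm_nonneg ((T ^ n) q), norm_nonneg ((T ^ n) (V x)), norm_nonneg p, h3]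
  have hp0 : ‖p‖ ≤ 0 := ge_of_tendsto' (by simpa using hVx.norm) hple
  have : p = 0 := norm_le_zero_iff.mp hp0
  rw [← hdec, this, zero_add]
  exact hqM

set_option maxHeartbeats 2000000 in
/-- Let `(T, V)` be twisted with twist `U`, `T` a contraction with canonical
decomposition `H = H_u ⊕ H_{¬u}` (here `M = H_u`, `Mᗮ = H_{¬u}`): `M` and `Mᗮ` reduce `T`,
`T` is unitary on `M` and completely non-unitary on `Mᗮ`. If the c.n.u. part of `T` is of
class `C_{0·}` then `Mᗮ` is invariant under `V`; if it is of class `C_{·0}` then `M` is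
invariant under `V`. -/
theorem twisted_cnu_invariance
    {H : Type*} [NormedAddCommGroup H] [InnerProductSpace ℂ H] [CompleteSpace H]
    (T V U : H →L[ℂ] H)
    (hT : ‖T‖ ≤ 1)
    (hU : adjoint U ∘L U = 1 ∧ U ∘L adjoint U = 1)
    (hUT : U ∘L T = T ∘L U) (hUV : U ∘L V = V ∘L U)
    (hTV : T ∘L V = U ∘L (V ∘L T))
    (M : Submodule ℂ H) (hMclosed : IsClosed (M : Set H))
    -- M and Mᗮ reduce T
    (hTM : ∀ x ∈ M, T x ∈ M) (hTMadj : ∀ x ∈ M, adjoint T x ∈ M)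
    -- T restricted to M is unitary
    (hTu_iso : ∀ x ∈ M, ‖T x‖ = ‖x‖)
    (hTu_onto : (M : Set H) ⊆ T '' (M : Set H))
    -- T restricted to Mᗮ is completely non-unitary
    (hcnu : ∀ L : Submodule ℂ H, IsClosed (L : Set H) → L ≤ Mᗮ →
      (∀ x ∈ L, T x ∈ L) → (∀ x ∈ L, adjoint T x ∈ L) →
      (∀ x ∈ L, ‖T x‖ = ‖x‖) → ((L : Set H) ⊆ T '' (L : Set H)) → L = ⊥) :
    ((∀ h ∈ Mᗮ, Tendsto (fun n : ℕ => (T ^ n) h) atTop (nhds 0)) →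
        ∀ x ∈ Mᗮ, V x ∈ Mᗮ) ∧
    ((∀ h ∈ Mᗮ, Tendsto (fun n : ℕ => ((adjoint T) ^ n) h) atTop (nhds 0)) →
        ∀ x ∈ M, V x ∈ M) := by
  haveI : CompleteSpace M := hMclosed.completeSpace_coe
  obtain ⟨hU1, hU2⟩ := hU
  simp only [← ContinuousLinearMap.mul_def] at hU1 hU2 hUT hUV hTV
  have hU1' : adjoint U * U = 1 := hU1
  have hU2' : U * adjoint U = 1 := hU2
  -- U is an isometry
  have hUiso : ∀ y : H, ‖U y‖ = ‖y‖ := by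
    intro y
    have h1 : inner ℂ (U y) (U y) = inner ℂ y y := by
      rw [← adjoint_inner_left]
      have : adjoint U (U y) = y := by
        have := congrArg (fun A : H →L[ℂ] H => A y) hU1
        simpa using this
      rw [this]
    rw [norm_eq_sqrt_re_inner (𝕜 := ℂ) (U y), norm_eq_sqrt_re_inner (𝕜 := ℂ) y, h1]
  -- T maps Mᗮ into Mᗮ
  have hTMperp : ∀ x ∈ Mᗮ, T x ∈ Mᗮ := by
    intro w hw
    rw [Submodule.mem_orthogonal]
    intro m hm
    rw [← adjoint_inner_left]
    exact Submodule.inner_right_of_mem_orthogonal (hTMadj m hm) hw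
  -- adjoint T maps Mᗮ into Mᗮ
  have hTadjMperp : ∀ x ∈ Mᗮ, adjoint T x ∈ Mᗮ := by
    intro w hw
    rw [Submodule.mem_orthogonal]
    intro m hm
    rw [adjoint_inner_right]
    exact Submodule.inner_right_of_mem_orthogonal (hTM m hm) hw
  -- commutation of U with adjoints
  have hadj_mul : ∀ A B : H →L[ℂ] H, adjoint (A * B) = adjoint B * adjoint A := by
    intro A B
    rw [ContinuousLinearMap.mul_def A B, ContinuousLinearMap.mul_def (adjoint B) (adjoint A)]
    exact adjoint_comp A B
  have hUTadj : U * adjoint T = adjoint T * U := by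
    have h1 : adjoint T * adjoint U = adjoint U * adjoint T := by
      rw [← hadj_mul U T, ← hadj_mul T U, hUT]
    calc U * adjoint T = U * adjoint T * (adjoint U * U) := by rw [hU1', mul_one]
      _ = U * (adjoint T * adjoint U) * U := by simp only [mul_assoc]
      _ = U * (adjoint U * adjoint T) * U := by rw [h1]
      _ = (U * adjoint U) * (adjoint T * U) := by simp only [mul_assoc]
      _ = adjoint T * U := by rw [hU2', one_mul]
  have hUVadj : U * adjoint V = adjoint V * U := by
    have h1 : adjoint V * adjoint U = adjoint U * adjoint V := by
      rw [← hadj_mul U V, ← hadj_mul V U, hUV]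
    calc U * adjoint V = U * adjoint V * (adjoint U * U) := by rw [hU1', mul_one]
      _ = U * (adjoint V * adjoint U) * U := by simp only [mul_assoc]
      _ = U * (adjoint U * adjoint V) * U := by rw [h1]
      _ = (U * adjoint U) * (adjoint V * U) := by simp only [mul_assoc]
      _ = adjoint V * U := by rw [hU2', one_mul]
  -- twist relation for adjoints
  have hTVadj : adjoint T * adjoint V = U * (adjoint V * adjoint T) := by
    have hA : adjoint V * adjoint T = adjoint T * adjoint V * adjoint U := by
      rw [← hadj_mul T V, hTV, hadj_mul U (V * T), hadj_mul V T]
    calc adjoint T * adjoint V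
        = adjoint T * adjoint V * (adjoint U * U) := by rw [hU1', mul_one]
      _ = (adjoint T * adjoint V * adjoint U) * U := by simp only [mul_assoc]
      _ = (adjoint V * adjoint T) * U := by rw [← hA]
      _ = adjoint V * (adjoint T * U) := by simp only [mul_assoc]
      _ = adjoint V * (U * adjoint T) := by rw [← hUTadj]
      _ = (adjoint V * U) * adjoint T := by simp only [mul_assoc]
      _ = (U * adjoint V) * adjoint T := by rw [hUVadj]
      _ = U * (adjoint V * adjoint T) := by simp only [mul_assoc]
  -- adjoint T is isometric on M
  have hTadjiso : ∀ y ∈ M, ‖adjoint T y‖ = ‖y‖ := by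
    intro y hy
    obtain ⟨z, hzM, hz⟩ := hTu_onto hy
    have h1 : ‖T z‖ = ‖z‖ := hTu_iso z hzM
    have hadjnorm : ‖adjoint T‖ = ‖T‖ := LinearIsometryEquiv.norm_map adjoint T
    have key : adjoint T (T z) = z := by
      have hn : ‖adjoint T (T z) - z‖ ^ 2 =
          ‖adjoint T (T z)‖ ^ 2 - 2 * RCLike.re (inner ℂ (adjoint T (T z)) z) + ‖z‖ ^ 2 :=
        norm_sub_sq _ _
      have hre : RCLike.re (inner ℂ (adjoint T (T z)) z) = ‖T z‖ ^ 2 := by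
        rw [adjoint_inner_left]
        exact inner_self_eq_norm_sq (𝕜 := ℂ) (T z)
      have hb : ‖adjoint T (T z)‖ ≤ ‖z‖ := by
        calc ‖adjoint T (T z)‖ ≤ ‖adjoint T‖ * ‖T z‖ := (adjoint T).le_opNorm _
          _ ≤ 1 * ‖z‖ := by rw [hadjnorm, h1]; exact mul_le_mul_of_nonneg_right hT (norm_nonneg z)
          _ = ‖z‖ := one_mul _
      have hz2 : ‖adjoint T (T z) - z‖ ^ 2 ≤ 0 := by
        rw [hn, hre, h1]
        nlinarith [norm_nonneg (adjoint T (T z)), norm_nonneg z]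
      have : ‖adjoint T (T z) - z‖ = 0 := by
        nlinarith [norm_nonneg (adjoint T (T z) - z)]
      exact sub_eq_zero.mp (norm_eq_zero.mp this)
    rw [← hz, key, h1]
  constructor
  · intro hC
    exact twisted_aux T V U hUiso hUT hTV M hMclosed hTM hTMperp hTu_iso hC
  · intro hC x hxM
    have hVadj : ∀ w ∈ Mᗮ, adjoint V w ∈ Mᗮ :=
      twisted_aux (adjoint T) (adjoint V) U hUiso hUTadj hTVadj M hMclosed
        hTMadj hTadjMperp hTadjiso hC
    have hMM : M = Mᗮᗮ := (Submodule.orthogonal_orthogonal M).symm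
    rw [hMM, Submodule.mem_orthogonal]
    intro w hw
    rw [← adjoint_inner_left]
    exact Submodule.inner_left_of_mem_orthogonal hxM (hVadj w hw)
end
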